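/- arXiv:1803.10986 — 2 statements merged into one kernel-verified Lean document; each statement's English description precedes it below -/
import Mathlib

section
/- Let y : ℝ^{n_h} × ℝ^n → ℝ^{n·n_h} be the bilinear map y(h,x) = x ⊗ h (Kronecker product of vectors). Then the operator 1-norm of its Jacobian at (h,x) equals max{‖x‖₁, ‖h‖₁}. -/
/-! The column of the Jacobian for `δh = e_k` is `x ⊗ e_k`, whose 1-norm is `‖x‖₁`, and the
column for `δx = e_l` is `e_l ⊗ h`, whose 1-norm is `‖h‖₁`; with both kinds of column present,
the largest column sum is `max {‖x‖₁, ‖h‖₁}`. -/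

section KroneckerColumn

variable {R ι κ : Type*} [Ring R] [LinearOrder R] [IsOrderedRing R] [Fintype ι] [Fintype κ]

theorem sum_abs_mul_ite_eq_sum_abs [DecidableEq κ] (f : ι → R) (k : κ) :
    ∑ p : ι × κ, |f p.1 * (if p.2 = k then (1 : R) else 0)| = ∑ i, |f i| := by
  simp [Fintype.sum_prod_type, mul_ite, apply_ite abs]

theorem sum_abs_ite_mul_eq_sum_abs [DecidableEq ι] (g : κ → R) (l : ι) :
    ∑ p : ι × κ, |(if p.1 = l then (1 : R) else 0) * g p.2| = ∑ j, |g j| := by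
  simp [Fintype.sum_prod_type, ite_mul, apply_ite abs]

end KroneckerColumn

theorem ciSup_sumElim_const {α β γ : Type*} [ConditionallyCompleteLinearOrder γ]
    [Nonempty α] [Nonempty β] (a b : γ) :
    ⨆ c : α ⊕ β, Sum.elim (fun _ => a) (fun _ => b) c = max a b := by
  have hbdd : BddAbove (Set.range (Sum.elim (fun _ : α => a) (fun _ : β => b))) :=
    ⟨max a b, by rintro _ ⟨c | c, rfl⟩ <;> simp⟩
  refine le_antisymm (ciSup_le ?_) (max_le ?_ ?_)
  · rintro (c | c) <;> simp
  · exact le_ciSup_of_le hbdd (Sum.inl (Classical.arbitrary α)) le_rfl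
  · exact le_ciSup_of_le hbdd (Sum.inr (Classical.arbitrary β)) le_rfl

/-- The Jacobian of the bilinear map `y(h,x) = x ⊗ h` at `(h, x)` is the linear
map `(δh, δx) ↦ x ⊗ δh + δx ⊗ h`; its matrix (with columns indexed by
`Fin n_h ⊕ Fin n`) has operator 1-norm (maximum absolute column sum) equal to
`max {‖x‖₁, ‖h‖₁}`. -/
theorem jacobian_kron_one_norm (nh n : ℕ) (hnh : 0 < nh) (hn : 0 < n)
    (h : Fin nh → ℝ) (x : Fin n → ℝ) :
    (⨆ c : Fin nh ⊕ Fin n, ∑ p : Fin n × Fin nh,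
        |Sum.elim
            (fun k => fun p : Fin n × Fin nh =>
              x p.1 * (if p.2 = k then (1 : ℝ) else 0))
            (fun l => fun p : Fin n × Fin nh =>
              (if p.1 = l then (1 : ℝ) else 0) * h p.2)
            c p|) =
      max (∑ j, |x j|) (∑ i, |h i|) := by
  have : Nonempty (Fin nh) := ⟨⟨0, hnh⟩⟩
  have : Nonempty (Fin n) := ⟨⟨0, hn⟩⟩
  calc _ = ⨆ c : Fin nh ⊕ Fin n, Sum.elim (fun _ => ∑ j, |x j|) (fun _ => ∑ i, |h i|) c := by
        refine iSup_congr ?_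
        rintro (k | l)
        · exact sum_abs_mul_ite_eq_sum_abs x k
        · exact sum_abs_ite_mul_eq_sum_abs h l
    _ = max (∑ j, |x j|) (∑ i, |h i|) := ciSup_sumElim_const _ _
end

section
/- Let A ∈ ℝ^{n_o×n}, G ∈ ℝ^{n×n_h}, B ∈ ℝ^{n×n}, h ∈ ℝ^{n_h}, x ∈ ℝⁿ, and s = Aᵀ(Gh ⊙ Bᵀx). Suppose the computed value ŝ satisfies ŝ = s + J₃J₂Δa₂ + J₃Δa₃ + Δa₄ where J₃ = Aᵀ, J₂ = [Diag(Bᵀx), Diag(Gh)], |Δa₂| ≤ (γ·|G||h| ; β·|Bᵀ||x|)·ε componentwise, |Δa₃| ≤ (|G||h| ⊙ |Bᵀ||x|)·ε, and |Δa₄| ≤ α·|Aᵀ|(|G||h| ⊙ |Bᵀ||x|)·ε, for nonnegative constants α, β, γ. Then componentwise |ŝ − s| ≤ |Aᵀ|(|G||h| ⊙ |Bᵀ||x|)·(α + β + γ + 1)·ε. -/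
open Matrix

/-! The error `shat - s` is `Aᵀ` applied to the per-entry error
`(Bᵀx)ᵢ Δghᵢ + (Gh)ᵢ Δbxᵢ + Δ3ᵢ` of the Hadamard product, plus `Δ4`. Bounding `|Gh| ≤ |G||h|` and
`|Bᵀx| ≤ |Bᵀ||x|` makes each per-entry error at most `(|G||h|)ᵢ (|Bᵀ||x|)ᵢ (β + γ + 1) ε`; pushing
this through `|Aᵀ|` and adding the bound on `Δ4` gives the claim. -/

section OrderedRing

variable {R : Type*} [CommRing R] [LinearOrder R] [IsStrictOrderedRing R]

theorem Matrix.abs_mulVec_le_of_abs_le {m n : Type*} [Fintype n] (M : Matrix m n R)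
    {u w : n → R} (huw : ∀ j, |u j| ≤ w j) (i : m) :
    |(M *ᵥ u) i| ≤ ∑ j, |M i j| * w j :=
  calc |(M *ᵥ u) i| = |∑ j, M i j * u j| := rfl
    _ ≤ ∑ j, |M i j * u j| := Finset.abs_sum_le_sum_abs _ _
    _ ≤ ∑ j, |M i j| * w j := Finset.sum_le_sum fun j _ => by
      rw [abs_mul]; exact mul_le_mul_of_nonneg_left (huw j) (abs_nonneg _)

theorem Matrix.abs_mulVec_le {m n : Type*} [Fintype n] (M : Matrix m n R) (v : n → R) (i : m) :
    |(M *ᵥ v) i| ≤ ∑ j, |M i j| * |v j| :=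
  M.abs_mulVec_le_of_abs_le (fun _ => le_rfl) i

/-- First-order error of a product `a * b` under perturbations `da`, `db` of its factors and a
rounding error `d`, with relative sizes `γ`, `β` and `1`. -/
theorem abs_mul_add_mul_add_le {a b da db d r t β γ ε : R} (ha : |a| ≤ r) (hb : |b| ≤ t)
    (hda : |da| ≤ γ * r * ε) (hdb : |db| ≤ β * t * ε) (hd : |d| ≤ r * t * ε) :
    |b * da + a * db + d| ≤ r * t * ((β + γ + 1) * ε) :=
  calc |b * da + a * db + d| ≤ |b| * |da| + |a| * |db| + |d| := by
        rw [← abs_mul, ← abs_mul]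
        exact (abs_add_le _ _).trans (add_le_add_left (abs_add_le _ _) _)
    _ ≤ t * (γ * r * ε) + r * (β * t * ε) + r * t * ε := by
        gcongr
        · exact (abs_nonneg _).trans hb
        · exact (abs_nonneg _).trans ha
    _ = r * t * ((β + γ + 1) * ε) := by ring

end OrderedRing

theorem toom_cook_componentwise_error_general (n no nh : ℕ)
    (A : Matrix (Fin n) (Fin no) ℝ) (G : Matrix (Fin n) (Fin nh) ℝ)
    (B : Matrix (Fin n) (Fin n) ℝ)
    (h : Fin nh → ℝ) (x : Fin n → ℝ)
    (α β γ ε : ℝ)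
    (s shat : Fin no → ℝ)
    (Δgh Δbx Δ3 : Fin n → ℝ) (Δ4 : Fin no → ℝ)
    (hΔgh : ∀ i, |Δgh i| ≤ γ * (∑ j, |G i j| * |h j|) * ε)
    (hΔbx : ∀ i, |Δbx i| ≤ β * (∑ j, |Bᵀ i j| * |x j|) * ε)
    (hΔ3 : ∀ i, |Δ3 i| ≤ (∑ j, |G i j| * |h j|) * (∑ j, |Bᵀ i j| * |x j|) * ε)
    (hΔ4 : ∀ q, |Δ4 q| ≤
      α * (∑ i, |Aᵀ q i| * ((∑ j, |G i j| * |h j|) * (∑ j, |Bᵀ i j| * |x j|))) * ε)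
    (hshat : shat = fun q => s q +
      Aᵀ.mulVec (fun i => Bᵀ.mulVec x i * Δgh i + G.mulVec h i * Δbx i) q +
      Aᵀ.mulVec Δ3 q + Δ4 q) :
    ∀ q, |shat q - s q| ≤
      (∑ i, |Aᵀ q i| * ((∑ j, |G i j| * |h j|) * (∑ j, |Bᵀ i j| * |x j|))) *
        (α + β + γ + 1) * ε := by
  intro q
  set e : Fin n → ℝ := fun i => Bᵀ.mulVec x i * Δgh i + G.mulVec h i * Δbx i + Δ3 i
  have he : ∀ i, |e i| ≤
      (∑ j, |G i j| * |h j|) * (∑ j, |Bᵀ i j| * |x j|) * ((β + γ + 1) * ε) := fun i =>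
    abs_mul_add_mul_add_le (G.abs_mulVec_le h i) (Bᵀ.abs_mulVec_le x i)
      (hΔgh i) (hΔbx i) (hΔ3 i)
  have hdiff : shat q - s q = (Aᵀ *ᵥ e) q + Δ4 q := by
    have : e = (fun i => Bᵀ.mulVec x i * Δgh i + G.mulVec h i * Δbx i) + Δ3 := rfl
    rw [hshat, this, mulVec_add]
    simp only [Pi.add_apply]
    ring
  set S := ∑ i, |Aᵀ q i| * ((∑ j, |G i j| * |h j|) * (∑ j, |Bᵀ i j| * |x j|))
  have hAe : |(Aᵀ *ᵥ e) q| ≤ S * ((β + γ + 1) * ε) := by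
    simpa only [S, Finset.sum_mul, mul_assoc] using Aᵀ.abs_mulVec_le_of_abs_le he q
  calc |shat q - s q| ≤ |(Aᵀ *ᵥ e) q| + |Δ4 q| := hdiff ▸ abs_add_le _ _
    _ ≤ S * ((β + γ + 1) * ε) + α * S * ε := add_le_add hAe (hΔ4 q)
    _ = S * (α + β + γ + 1) * ε := by ring

/-- Componentwise first-order error bound for Toom-Cook convolution
`s = Aᵀ(Gh ⊙ Bᵀx)`: if the computed value decomposes as
`shat = s + J₃J₂Δa₂ + J₃Δa₃ + Δa₄` with `J₃ = Aᵀ`,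
`J₂ = [Diag(Bᵀx), Diag(Gh)]`, and componentwise bounds
`|Δ(Gh)| ≤ γ |G||h| ε`, `|Δ(Bᵀx)| ≤ β |Bᵀ||x| ε`,
`|Δa₃| ≤ (|G||h| ⊙ |Bᵀ||x|) ε`, `|Δa₄| ≤ α |Aᵀ|(|G||h| ⊙ |Bᵀ||x|) ε`,
then `|shat − s| ≤ |Aᵀ|(|G||h| ⊙ |Bᵀ||x|)(α + β + γ + 1) ε` componentwise. -/
theorem toom_cook_componentwise_error (n no nh : ℕ)
    (A : Matrix (Fin n) (Fin no) ℝ) (G : Matrix (Fin n) (Fin nh) ℝ)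
    (B : Matrix (Fin n) (Fin n) ℝ)
    (h : Fin nh → ℝ) (x : Fin n → ℝ)
    (α β γ ε : ℝ) (hα : 0 ≤ α) (hβ : 0 ≤ β) (hγ : 0 ≤ γ) (hε : 0 ≤ ε)
    (s shat : Fin no → ℝ)
    (hs : s = Aᵀ.mulVec (fun i => G.mulVec h i * Bᵀ.mulVec x i))
    (Δgh Δbx Δ3 : Fin n → ℝ) (Δ4 : Fin no → ℝ)
    (hΔgh : ∀ i, |Δgh i| ≤ γ * (∑ j, |G i j| * |h j|) * ε)
    (hΔbx : ∀ i, |Δbx i| ≤ β * (∑ j, |Bᵀ i j| * |x j|) * ε)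
    (hΔ3 : ∀ i, |Δ3 i| ≤ (∑ j, |G i j| * |h j|) * (∑ j, |Bᵀ i j| * |x j|) * ε)
    (hΔ4 : ∀ q, |Δ4 q| ≤
      α * (∑ i, |Aᵀ q i| * ((∑ j, |G i j| * |h j|) * (∑ j, |Bᵀ i j| * |x j|))) * ε)
    (hshat : shat = fun q => s q +
      Aᵀ.mulVec (fun i => Bᵀ.mulVec x i * Δgh i + G.mulVec h i * Δbx i) q +
      Aᵀ.mulVec Δ3 q + Δ4 q) :
    ∀ q, |shat q - s q| ≤
      (∑ i, |Aᵀ q i| * ((∑ j, |G i j| * |h j|) * (∑ j, |Bᵀ i j| * |x j|))) *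
        (α + β + γ + 1) * ε :=
  toom_cook_componentwise_error_general n no nh A G B h x α β γ ε s shat Δgh Δbx Δ3 Δ4 hΔgh hΔbx hΔ3
    hΔ4 hshat
end
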